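/- arXiv:2008.10412 — 2 statements merged into one kernel-verified Lean document; each statement's English description precedes it below -/
import Mathlib

section
/- Let V be a finite-dimensional real inner product space, A : V → V skew-adjoint and invertible, and define J := S⁻¹ ∘ A where S is the positive square root of -A². Then the bilinear form ω(x,y) := g(Ax, y) is compatible with J, i.e. ω(Jx, Jy) = ω(x,y) for all x,y, and ω(x, Jx) > 0 for all x ≠ 0. -/
open scoped RealInnerProductSpace

/-!
The key point is that `S` commutes with `A`. If `v` is an eigenvector of `S` with eigenvalue
`μ ≥ 0`, then `S² (A v) = A (S² v) = μ² A v`, and positivity of `S` forces `S (A v) = μ A v`,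
since `S + μ` is injective. Hence `J = S⁻¹ A` commutes with `A`, is skew-adjoint and satisfies
`J² = S⁻² A² = -1`, so `J` is orthogonal and `ω(Jx, Jy) = ⟪J A x, J y⟫ = ⟪A x, y⟫`. Finally
`ω(x, Jx) = ⟪S (J x), J x⟫ > 0`, as `J` is injective.
-/

namespace LinearMap

variable {V : Type*} [NormedAddCommGroup V] [InnerProductSpace ℝ V]

lemma apply_eq_smul_of_apply_apply_eq_sq_smul {S : V →ₗ[ℝ] V}
    (hS_pos : ∀ x, x ≠ 0 → 0 < ⟪S x, x⟫) {μ : ℝ} (hμ : 0 ≤ μ) {u : V}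
    (h : S (S u) = μ ^ 2 • u) : S u = μ • u := by
  set w := S u - μ • u
  -- `S² - μ² = (S + μ)(S - μ)`, so `w` is an eigenvector of `S` for `-μ ≤ 0`.
  have hw : S w = -(μ • w) := by
    simp only [w, map_sub, map_smul, h, smul_sub, smul_smul]
    module
  by_contra hne
  have hpos := hS_pos w (sub_ne_zero.mpr hne)
  rw [hw, inner_neg_left, real_inner_smul_left] at hpos
  nlinarith [real_inner_self_nonneg (x := w)]

lemma IsSymmetric.commute_of_commute_mul_self [FiniteDimensional ℝ V] {S B : Module.End ℝ V}
    (hS : S.IsSymmetric) (hS_pos : ∀ x, x ≠ 0 → 0 < ⟪S x, x⟫) (h : Commute B (S * S)) :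
    Commute B S := by
  refine (hS.eigenvectorBasis rfl).toBasis.ext fun i ↦ ?_
  set v := hS.eigenvectorBasis rfl i
  set μ := hS.eigenvalues rfl i
  have hv : S v = μ • v := by
    simpa only [RCLike.ofReal_real_eq_id, id_eq] using hS.apply_eigenvectorBasis rfl i
  have hμ : 0 ≤ μ := by
    simpa [hv, real_inner_smul_left, real_inner_self_eq_norm_sq, v] using
      (hS_pos v ((hS.eigenvectorBasis rfl).orthonormal.ne_zero i)).le
  have hBv : S (S (B v)) = μ ^ 2 • B v := by
    rw [← Module.End.mul_apply, ← Module.End.mul_apply, ← h.eq, Module.End.mul_apply,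
      Module.End.mul_apply, hv, map_smul, hv, smul_smul, map_smul, sq]
  simp only [OrthonormalBasis.coe_toBasis, Module.End.mul_apply]
  rw [apply_eq_smul_of_apply_apply_eq_sq_smul hS_pos hμ hBv, hv, map_smul]

end LinearMap

theorem omega_compatible_general {V : Type*} [NormedAddCommGroup V] [InnerProductSpace ℝ V] [FiniteDimensional ℝ V]
    (A S T : V →ₗ[ℝ] V)
    (hA_skew : LinearMap.adjoint A = -A)
    (hS_selfadj : LinearMap.adjoint S = S)
    (hS_pos : ∀ x : V, x ≠ 0 → 0 < ⟪S x, x⟫)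
    (hS_sq : S ∘ₗ S = -(A ∘ₗ A))
    (hTS : T ∘ₗ S = LinearMap.id) (hST : S ∘ₗ T = LinearMap.id) :
    (∀ x y : V, ⟪A ((T ∘ₗ A) x), (T ∘ₗ A) y⟫ = ⟪A x, y⟫) ∧
      (∀ x : V, x ≠ 0 → 0 < ⟪A x, (T ∘ₗ A) x⟫) := by
  have hS : S.IsSymmetric := (S.isSymmetric_iff_isSelfAdjoint).mpr hS_selfadj
  have hST' : ∀ x, S (T x) = x := LinearMap.congr_fun hST
  have hTS' : ∀ x, T (S x) = x := LinearMap.congr_fun hTS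
  have hT : T.IsSymmetric := fun x y ↦ by simpa only [hST'] using (hS (T x) (T y)).symm
  have hA : ∀ x y, ⟪A x, y⟫ = -⟪x, A y⟫ := fun x y ↦ by
    rw [← LinearMap.adjoint_inner_right, hA_skew, LinearMap.neg_apply, inner_neg_right]
  have hAA : ∀ x, A (A x) = -S (S x) := fun x ↦
    neg_eq_iff_eq_neg.mp (LinearMap.congr_fun hS_sq x).symm
  have hAS : Commute A S := hS.commute_of_commute_mul_self hS_pos <| by
    rw [Module.End.mul_eq_comp, hS_sq]
    exact ((Commute.refl A).mul_right (Commute.refl A)).neg_right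
  have hAT : ∀ x, A (T x) = T (A x) :=
    LinearMap.congr_fun (hAS.units_inv_right (u := ⟨S, T, hST, hTS⟩)).eq
  set J := T ∘ₗ A
  have hJJ : ∀ x, J (J x) = -x := fun x ↦ by
    simp only [J, LinearMap.comp_apply, hAT, hAA, map_neg, hTS']
  have hJ : ∀ x y, ⟪J x, y⟫ = -⟪x, J y⟫ := fun x y ↦ by
    rw [LinearMap.comp_apply, LinearMap.comp_apply, hT, hA, hAT]
  have hSJ : ∀ x, S (J x) = A x := fun x ↦ hST' (A x)
  refine ⟨fun x y ↦ ?_, fun x hx ↦ ?_⟩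
  · rw [show A (J x) = J (A x) from hAT (A x), hJ, hJJ, inner_neg_right, neg_neg]
  · rw [← hSJ]
    exact hS_pos _ fun h ↦ hx (by simpa [h] using (hJJ x).symm)

/-- the form `ω(x,y) = ⟪A x, y⟫` is compatible with `J := S⁻¹ ∘ A`:
`ω(Jx, Jy) = ω(x, y)` and `ω(x, Jx) > 0` for `x ≠ 0`. -/
theorem omega_compatible {V : Type*} [NormedAddCommGroup V] [InnerProductSpace ℝ V] [FiniteDimensional ℝ V]
    (A S T : V →ₗ[ℝ] V)
    (hA_skew : LinearMap.adjoint A = -A)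
    (hA_inv : Function.Bijective A)
    (hS_selfadj : LinearMap.adjoint S = S)
    (hS_pos : ∀ x : V, x ≠ 0 → 0 < ⟪S x, x⟫)
    (hS_sq : S ∘ₗ S = -(A ∘ₗ A))
    (hTS : T ∘ₗ S = LinearMap.id) (hST : S ∘ₗ T = LinearMap.id) :
    (∀ x y : V, ⟪A ((T ∘ₗ A) x), (T ∘ₗ A) y⟫ = ⟪A x, y⟫) ∧
      (∀ x : V, x ≠ 0 → 0 < ⟪A x, (T ∘ₗ A) x⟫) :=
  omega_compatible_general A S T hA_skew hS_selfadj hS_pos hS_sq hTS hST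
end

section
/- Let V be a finite-dimensional real inner product space, σ an isometric linear involution of V, and A a skew-adjoint invertible linear map anticommuting with σ. Then J := S⁻¹ ∘ A anticommutes with σ, where S is the positive square root of -A². -/
/-!
`S² = -A²` commutes with `σ` because `A` anticommutes with it. A positive square root of `S²`
acts on each eigenspace `E_μ` of `S²` as `√μ`, and `σ` preserves these eigenspaces, so `S`
commutes with `σ`; hence so does `T = S⁻¹`, and `J = T A` inherits the anticommutation of `A`.
-/

open scoped RealInnerProductSpace
open Module End

namespace LinearMap.IsPositive

variable {E : Type*} [NormedAddCommGroup E] [InnerProductSpace ℝ E] {S : E →ₗ[ℝ] E}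

theorem apply_eq_sqrt_smul_of_mem_eigenspace_mul_self (hS : S.IsPositive) {μ : ℝ} {x : E}
    (hx : x ∈ eigenspace (S * S) μ) : S x = √μ • x := by
  rw [mem_eigenspace_iff, mul_apply] at hx
  rcases (Real.sqrt_nonneg μ).eq_or_lt with hc | hc
  · have hμ : μ ≤ 0 := Real.sqrt_eq_zero'.mp hc.symm
    have hSx : ⟪S x, S x⟫ = μ * ⟪x, x⟫ := by
      rw [hS.isSymmetric, hx, real_inner_smul_right]
    rw [← hc, zero_smul, ← real_inner_self_nonpos, hSx]
    exact mul_nonpos_of_nonpos_of_nonneg hμ real_inner_self_nonneg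
  · set y := S x - √μ • x with hy
    have hSy : S y = -(√μ • y) := by
      rw [hy, map_sub, map_smul, hx, smul_sub, smul_smul,
        Real.mul_self_sqrt (Real.sqrt_pos.mp hc).le]
      abel
    have hSyy : 0 ≤ -(√μ * ⟪y, y⟫) := by
      simpa only [hSy, inner_neg_left, real_inner_smul_left] using hS.inner_nonneg_left y
    have hy0 : ⟪y, y⟫ ≤ 0 := nonpos_of_mul_nonpos_right (neg_nonneg.mp hSyy) hc
    exact sub_eq_zero.mp (real_inner_self_nonpos.mp hy0)

theorem commute_of_commute_mul_self [FiniteDimensional ℝ E] (hS : S.IsPositive)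
    {σ : E →ₗ[ℝ] E} (h : Commute (S * S) σ) : Commute S σ := by
  have hD : (S * S).IsSymmetric := hS.isSymmetric.mul_of_commute hS.isSymmetric (.refl S)
  have hspan : Submodule.span ℝ (⋃ μ, (eigenspace (S * S) μ : Set E)) = ⊤ := by
    rw [← Submodule.iSup_eq_span]
    exact Submodule.orthogonal_eq_bot_iff.mp hD.orthogonalComplement_iSup_eigenspaces_eq_bot
  refine LinearMap.ext_on hspan fun x hx => ?_
  obtain ⟨μ, hx⟩ := Set.mem_iUnion.mp hx
  have hσx : σ x ∈ eigenspace (S * S) μ := mapsTo_genEigenspace_of_comm h μ 1 hx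
  simp only [mul_apply, hS.apply_eq_sqrt_smul_of_mem_eigenspace_mul_self hx,
    hS.apply_eq_sqrt_smul_of_mem_eigenspace_mul_self hσx, map_smul]

end LinearMap.IsPositive

theorem commute_mul_self_of_mul_eq_neg_mul {R : Type*} [NonUnitalRing R] {a b : R}
    (h : a * b = -(b * a)) : Commute (a * a) b := by
  rw [commute_iff_eq, mul_assoc, h, mul_neg, ← mul_assoc, h, neg_mul, neg_neg, mul_assoc]

theorem J_anticomm_sigma_general {V : Type*} [NormedAddCommGroup V] [InnerProductSpace ℝ V] [FiniteDimensional ℝ V]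
    (A S T : V →ₗ[ℝ] V)
    (hS_selfadj : LinearMap.adjoint S = S)
    (hS_pos : ∀ x : V, x ≠ 0 → 0 < ⟪S x, x⟫)
    (hS_sq : S ∘ₗ S = -(A ∘ₗ A))
    (hTS : T ∘ₗ S = LinearMap.id) (hST : S ∘ₗ T = LinearMap.id)
    (σ : V →ₗ[ℝ] V)
    (hAσ_anticomm : A ∘ₗ σ = -(σ ∘ₗ A)) :
    (T ∘ₗ A) ∘ₗ σ = -(σ ∘ₗ (T ∘ₗ A)) := by
  have hAσ : A * σ = -(σ * A) := hAσ_anticomm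
  have hS : S.IsPositive := by
    have hS_symm : S.IsSymmetric :=
      (LinearMap.isSymmetric_iff_isSelfAdjoint S).mpr (LinearMap.isSelfAdjoint_iff'.mpr hS_selfadj)
    refine ⟨hS_symm, fun x => ?_⟩
    rcases eq_or_ne x 0 with rfl | hx
    · simp
    · exact (hS_pos x hx).le
  have hSσ : Commute S σ := by
    refine hS.commute_of_commute_mul_self ?_
    rw [mul_eq_comp, hS_sq]
    exact (commute_mul_self_of_mul_eq_neg_mul hAσ).neg_left
  have hTσ : Commute T σ := Commute.units_inv_left (u := ⟨S, T, hST, hTS⟩) hSσ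
  change T * A * σ = -(σ * (T * A))
  rw [mul_assoc, hAσ, mul_neg, ← mul_assoc, hTσ.eq, mul_assoc]

/-- `J := S⁻¹ ∘ A` anticommutes with `σ`. -/
theorem J_anticomm_sigma {V : Type*} [NormedAddCommGroup V] [InnerProductSpace ℝ V] [FiniteDimensional ℝ V]
    (A S T : V →ₗ[ℝ] V)
    (hA_skew : LinearMap.adjoint A = -A)
    (hA_inv : Function.Bijective A)
    (hS_selfadj : LinearMap.adjoint S = S)
    (hS_pos : ∀ x : V, x ≠ 0 → 0 < ⟪S x, x⟫)
    (hS_sq : S ∘ₗ S = -(A ∘ₗ A))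
    (hTS : T ∘ₗ S = LinearMap.id) (hST : S ∘ₗ T = LinearMap.id)
    (σ : V →ₗ[ℝ] V)
    (hσ_invol : σ ∘ₗ σ = LinearMap.id)
    (hσ_isom : ∀ x y : V, ⟪σ x, σ y⟫ = ⟪x, y⟫)
    (hAσ_anticomm : A ∘ₗ σ = -(σ ∘ₗ A)) :
    (T ∘ₗ A) ∘ₗ σ = -(σ ∘ₗ (T ∘ₗ A)) :=
  J_anticomm_sigma_general A S T hS_selfadj hS_pos hS_sq hTS hST σ hAσ_anticomm
end
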